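/- arXiv:1111.4809 — 6 statements merged into one kernel-verified Lean document; each statement's English description precedes it below -/
import Mathlib

section
/- Let Γ be a triangulation of the n-gon and let u be a function from the edges of Γ to ℝ such that: (i) for every triangle of Γ with edges a,b,c, the strict triangle inequalities |u(a)−u(b)| < u(c) < u(a)+u(b) hold; (ii) u(e_1)+⋯+u(e_n) = n; (iii) 2·u(e_i) is an integer for i = 1,…,n−1; and (iv) for every diagonal δ ∈ D, the number (Σ_{i ∈ I_δ} u(e_i)) − u(δ) is an integer. Then u(a) = 1 for every edge a of Γ. -/
open Classical

/-- `IsSide n p q` : the pair `{p, q}` (with `p < q`) is a side of the convex `n`-gon with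
vertices labeled `0, 1, …, n-1`; the sides are `e_i = {i-1, i}` for `i = 1, …, n-1`
together with `e_n = {0, n-1}`. -/
def IsSide (n p q : ℕ) : Prop :=
  p < q ∧ q < n ∧ (q = p + 1 ∨ (p = 0 ∧ q = n - 1))

/-- `IsDiag n p q` : the pair `{p, q}` (with `p < q`) is a diagonal of the `n`-gon, i.e.
a pair of distinct vertices which is not a side. -/
def IsDiag (n p q : ℕ) : Prop :=
  p < q ∧ q < n ∧ ¬(q = p + 1 ∨ (p = 0 ∧ q = n - 1))

/-- Two diagonals `{p, q}` (`p < q`) and `{p', q'}` (`p' < q'`) cross if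
`p < p' < q < q'` or `p' < p < q' < q`. -/
def Crosses (d d' : ℕ × ℕ) : Prop :=
  (d.1 < d'.1 ∧ d'.1 < d.2 ∧ d.2 < d'.2) ∨ (d'.1 < d.1 ∧ d.1 < d'.2 ∧ d'.2 < d.2)

/-- A triangulation of the `n`-gon: a set of `n - 3` pairwise non-crossing diagonals. -/
def IsTriangulation (n : ℕ) (D : Finset (ℕ × ℕ)) : Prop :=
  D.card = n - 3 ∧ (∀ d ∈ D, IsDiag n d.1 d.2) ∧
    ∀ d ∈ D, ∀ d' ∈ D, d ≠ d' → ¬Crosses d d'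

/-- The edges of the triangulation with diagonal set `D`: the sides of the `n`-gon
together with the diagonals in `D`. -/
def IsEdge (n : ℕ) (D : Finset (ℕ × ℕ)) (p q : ℕ) : Prop :=
  IsSide n p q ∨ (p, q) ∈ D

/-- A triangle of the triangulation: vertices `p < q < r` such that all three pairs are
edges. -/
def IsTriangleOf (n : ℕ) (D : Finset (ℕ × ℕ)) (p q r : ℕ) : Prop :=
  p < q ∧ q < r ∧ IsEdge n D p q ∧ IsEdge n D q r ∧ IsEdge n D p r

/-- A function `u` on edges (given on ordered pairs) satisfies the triangle inequalities of
the triangulation if for every triangle with edges `a, b, c` one has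
`|u a - u b| ≤ u c ≤ u a + u b`. -/
def SatisfiesTriangleIneqs (n : ℕ) (D : Finset (ℕ × ℕ)) (u : ℕ × ℕ → ℝ) : Prop :=
  ∀ p q r : ℕ, IsTriangleOf n D p q r →
    |u (p, q) - u (q, r)| ≤ u (p, r) ∧ u (p, r) ≤ u (p, q) + u (q, r)

lemma noncross_card_le : ∀ n : ℕ, ∀ S : Finset (ℕ × ℕ),
    (∀ d ∈ S, IsDiag n d.1 d.2) →
    (∀ d ∈ S, ∀ d' ∈ S, d ≠ d' → ¬Crosses d d') → S.card ≤ n - 3 := by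
  intro n
  induction n using Nat.strong_induction_on with
  | _ n ih =>
    intro S hdg hnc
    rcases S.eq_empty_or_nonempty with rfl | hne
    · simp
    obtain ⟨d0, hd0S, hd0min⟩ := S.exists_min_image (fun d => d.2 - d.1) hne
    obtain ⟨hab, hbn, hnsd⟩ := hdg d0 hd0S
    have hb2 : d0.1 + 2 ≤ d0.2 := by omega
    have hn4 : 4 ≤ n := by omega
    set g := d0.2 - d0.1 - 1 with hg
    have hout : ∀ d ∈ S, d ≠ d0 → (d.1 ≤ d0.1 ∨ d0.2 ≤ d.1) ∧ (d.2 ≤ d0.1 ∨ d0.2 ≤ d.2) := by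
      intro d hd hne'
      have h1 := hnc d hd d0 hd0S hne'
      have h2 := hnc d0 hd0S d hd (Ne.symm hne')
      have h3 := hd0min d hd
      obtain ⟨hd12, hd2n, hdnsd⟩ := hdg d hd
      have hne2 : ¬(d.1 = d0.1 ∧ d.2 = d0.2) := by
        intro hh; exact hne' (Prod.ext hh.1 hh.2)
      unfold Crosses at h1 h2
      omega
    classical
    set f : ℕ → ℕ := fun x => if x ≤ d0.1 then x else x - g with hfdef
    have hfval : ∀ x, f x = if x ≤ d0.1 then x else x - g := fun x => rfl
    set S' := (S.erase d0).image (fun d => (f d.1, f d.2)) with hS'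
    have finj : ∀ x y, (x ≤ d0.1 ∨ d0.2 ≤ x) → (y ≤ d0.1 ∨ d0.2 ≤ y) → f x = f y → x = y := by
      intro x y hx hy hxy; rw [hfval, hfval] at hxy; split_ifs at hxy <;> omega
    have hcardS' : S'.card = (S.erase d0).card := by
      apply Finset.card_image_of_injOn
      intro d hd d' hd' hEq
      have o1 := hout d (Finset.mem_of_mem_erase hd) (Finset.ne_of_mem_erase hd)
      have o2 := hout d' (Finset.mem_of_mem_erase hd') (Finset.ne_of_mem_erase hd')
      have e1 : f d.1 = f d'.1 := congrArg Prod.fst hEq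
      have e2 : f d.2 = f d'.2 := congrArg Prod.snd hEq
      exact Prod.ext (finj _ _ o1.1 o2.1 e1) (finj _ _ o1.2 o2.2 e2)
    have hdgS' : ∀ e ∈ S', IsDiag (n - g) e.1 e.2 := by
      intro e heS'
      rw [hS'] at heS'
      obtain ⟨d, hd, rfl⟩ := Finset.mem_image.mp heS'
      have hdS := Finset.mem_of_mem_erase hd
      have hned := Finset.ne_of_mem_erase hd
      obtain ⟨hd12, hd2n, hdnsd⟩ := hdg d hdS
      have o := hout d hdS hned
      have hne2 : ¬(d.1 = d0.1 ∧ d.2 = d0.2) := fun hh => hned (Prod.ext hh.1 hh.2)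
      have h3 := hd0min d hdS
      refine ⟨?_, ?_, ?_⟩
      all_goals (simp only [hfval]; split_ifs <;> omega)
    have hncS' : ∀ e ∈ S', ∀ e' ∈ S', e ≠ e' → ¬Crosses e e' := by
      intro e he e' he' hnee
      rw [hS'] at he he'
      obtain ⟨d, hd, rfl⟩ := Finset.mem_image.mp he
      obtain ⟨d', hd', rfl⟩ := Finset.mem_image.mp he'
      have hdS := Finset.mem_of_mem_erase hd
      have hd'S := Finset.mem_of_mem_erase hd'
      have hdne' : d ≠ d' := by rintro rfl; exact hnee rfl
      have hncdd := hnc d hdS d' hd'S hdne'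
      intro hcr
      apply hncdd
      have o1 := hout d hdS (Finset.ne_of_mem_erase hd)
      have o2 := hout d' hd'S (Finset.ne_of_mem_erase hd')
      have hrefl : ∀ x y, (x ≤ d0.1 ∨ d0.2 ≤ x) → (y ≤ d0.1 ∨ d0.2 ≤ y) → f x < f y → x < y := by
        intro x y hx hy hxy; rw [hfval, hfval] at hxy; split_ifs at hxy <;> omega
      unfold Crosses at hcr ⊢
      simp only at hcr
      rcases hcr with ⟨a1, a2, a3⟩ | ⟨a1, a2, a3⟩
      · exact Or.inl ⟨hrefl _ _ o1.1 o2.1 a1, hrefl _ _ o2.1 o1.2 a2, hrefl _ _ o1.2 o2.2 a3⟩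
      · exact Or.inr ⟨hrefl _ _ o2.1 o1.1 a1, hrefl _ _ o1.1 o2.2 a2, hrefl _ _ o2.2 o1.2 a3⟩
    have hcard1 : (S.erase d0).card + 1 = S.card := Finset.card_erase_add_one hd0S
    have hle := ih (n - g) (by omega) S' hdgS' hncS'
    omega

lemma exists_crossing {n : ℕ} {D : Finset (ℕ × ℕ)} (hD : IsTriangulation n D)
    {p q : ℕ} (h : IsDiag n p q) (hnot : (p, q) ∉ D) :
    ∃ d ∈ D, Crosses d (p, q) ∨ Crosses (p, q) d := by
  by_contra hcon
  push_neg at hcon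
  have h1 : ∀ d ∈ insert (p, q) D, IsDiag n d.1 d.2 := by
    intro d hd
    rcases Finset.mem_insert.mp hd with rfl | hd
    · exact h
    · exact hD.2.1 d hd
  have h2 : ∀ d ∈ insert (p, q) D, ∀ d' ∈ insert (p, q) D, d ≠ d' → ¬Crosses d d' := by
    intro d hd d' hd' hne
    rcases Finset.mem_insert.mp hd with rfl | hdD <;> rcases Finset.mem_insert.mp hd' with rfl | hd'D
    · exact absurd rfl hne
    · exact fun hc => (hcon d' hd'D).2 hc
    · exact fun hc => (hcon d hdD).1 hc
    · exact hD.2.2 d hdD d' hd'D hne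
  have hle := noncross_card_le n (insert (p, q) D) h1 h2
  rw [Finset.card_insert_of_notMem hnot, hD.1] at hle
  have h3 := hD.2.1
  have := h.2.1
  have := h.1
  omega

lemma edge_lt' {n : ℕ} {D : Finset (ℕ × ℕ)} (hD : IsTriangulation n D)
    {p q : ℕ} (h : IsEdge n D p q) : p < q ∧ q < n := by
  rcases h with hs | hd
  · exact ⟨hs.1, hs.2.1⟩
  · have := hD.2.1 _ hd
    exact ⟨this.1, this.2.1⟩

lemma exists_split {n : ℕ} {D : Finset (ℕ × ℕ)} (hD : IsTriangulation n D)
    {p r : ℕ} (he : IsEdge n D p r) (h2 : p + 2 ≤ r) :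
    ∃ q, p < q ∧ q < r ∧ IsEdge n D p q ∧ IsEdge n D q r := by
  have hpr := edge_lt' hD he
  set T := (Finset.Ioo p r).filter (fun t => IsEdge n D p t) with hT
  have hTne : T.Nonempty := ⟨p + 1, by
    simp only [hT, Finset.mem_filter, Finset.mem_Ioo]
    exact ⟨⟨by omega, by omega⟩, Or.inl ⟨by omega, by omega, Or.inl rfl⟩⟩⟩
  set q := T.max' hTne with hq
  have hqT : q ∈ T := T.max'_mem hTne
  have hqmax : ∀ t ∈ T, t ≤ q := fun t ht => T.le_max' t ht
  rw [hT, Finset.mem_filter, Finset.mem_Ioo] at hqT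
  obtain ⟨⟨hpq', hqr'⟩, heq⟩ := hqT
  refine ⟨q, hpq', hqr', heq, ?_⟩
  by_cases hadj : r = q + 1
  · exact Or.inl ⟨hqr', hpr.2, Or.inl hadj⟩
  by_cases hmem : (q, r) ∈ D
  · exact Or.inr hmem
  exfalso
  have hdiagqr : IsDiag n q r := ⟨hqr', hpr.2, by omega⟩
  obtain ⟨d, hdD, hcr⟩ := exists_crossing hD hdiagqr hmem
  obtain ⟨hdlt, hdn, hdns⟩ := hD.2.1 d hdD
  have hcases : (q < d.1 ∧ d.1 < r ∧ r < d.2) ∨ (d.1 < q ∧ q < d.2 ∧ d.2 < r) := by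
    unfold Crosses at hcr
    simp only at hcr
    omega
  rcases hcases with ⟨h1, h2', h3⟩ | ⟨h1, h2', h3⟩
  · -- d crosses (p, r)
    rcases he with hs | hmem'
    · rcases hs.2.2 with h' | h' <;> omega
    · refine hD.2.2 d hdD (p, r) hmem' ?_ ?_
      · intro hEq; have hx : d.2 = r := by rw [hEq]
        omega
      · exact Or.inr ⟨(by omega : p < d.1), (by omega : d.1 < r), (by omega : r < d.2)⟩
  · rcases Nat.lt_trichotomy d.1 p with hlt | heqp | hgt
    · -- d.1 < p : d crosses (p, r)
      rcases he with hs | hmem'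
      · rcases hs.2.2 with h' | h' <;> omega
      · refine hD.2.2 d hdD (p, r) hmem' ?_ ?_
        · intro hEq; have hx : d.1 = p := by rw [hEq]
          omega
        · exact Or.inl ⟨(by omega : d.1 < p), (by omega : p < d.2), (by omega : d.2 < r)⟩
    · -- d.1 = p: maximality violated
      have hmemT : d.2 ∈ T := by
        rw [hT, Finset.mem_filter, Finset.mem_Ioo]
        refine ⟨⟨by omega, by omega⟩, Or.inr ?_⟩
        have : (p, d.2) = d := by
          rw [Prod.ext_iff]; exact ⟨heqp.symm, rfl⟩
        rw [this]; exact hdD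
      have := hqmax d.2 hmemT
      omega
    · -- p < d.1 < q: d crosses (p,q)
      rcases heq with hs | hmem'
      · rcases hs.2.2 with h' | h' <;> omega
      · refine hD.2.2 (p, q) hmem' d hdD ?_ ?_
        · intro hEq; have hx : d.1 = p := by rw [← hEq]
          omega
        · exact Or.inl ⟨(by omega : p < d.1), (by omega : d.1 < q), (by omega : q < d.2)⟩

lemma exists_outer {n : ℕ} {D : Finset (ℕ × ℕ)} (hn : 3 ≤ n) (hD : IsTriangulation n D)
    {p r : ℕ} (he : IsEdge n D p r) (hne : ¬(p = 0 ∧ r = n - 1)) :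
    ∃ w, (w < p ∧ IsEdge n D w p ∧ IsEdge n D w r) ∨
         (r < w ∧ IsEdge n D r w ∧ IsEdge n D p w) := by
  have hpr := edge_lt' hD he
  have hP : ∃ k : ℕ, ∃ p' r', p' ≤ p ∧ r ≤ r' ∧ IsEdge n D p' r' ∧ ¬(p' = p ∧ r' = r) ∧ r' - p' = k :=
    ⟨n - 1, 0, n - 1, by omega, by omega,
      Or.inl ⟨by omega, by omega, Or.inr ⟨rfl, rfl⟩⟩, by omega, rfl⟩
  classical
  obtain ⟨p', r', hp'le, hr'le, he', hne', hk0⟩ := Nat.find_spec hP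
  have hmin : ∀ j, j < Nat.find hP →
      ¬∃ p'' r'', p'' ≤ p ∧ r ≤ r'' ∧ IsEdge n D p'' r'' ∧ ¬(p'' = p ∧ r'' = r) ∧ r'' - p'' = j :=
    fun j hj => Nat.find_min hP hj
  have hp'r' := edge_lt' hD he'
  have h2 : p' + 2 ≤ r' := by omega
  obtain ⟨m, hm1, hm2, hem1, hem2⟩ := exists_split hD he' h2
  rcases Nat.lt_trichotomy m p with hmp | hmp | hmp
  · -- m < p
    exact absurd ⟨m, r', by omega, hr'le, hem2, by omega, rfl⟩ (hmin (r' - m) (by omega))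
  · -- m = p
    subst hmp
    by_cases hr'r : r' = r
    · subst hr'r
      exact ⟨p', Or.inl ⟨hm1, hem1, he'⟩⟩
    · exact absurd ⟨m, r', le_refl m, hr'le, hem2, by omega, rfl⟩ (hmin (r' - m) (by omega))
  · rcases Nat.lt_trichotomy m r with hmr | hmr | hmr
    · -- p < m < r: crossing contradiction
      exfalso
      have hprD : (p, r) ∈ D := by
        rcases he with hs | h
        · rcases hs.2.2 with h' | h'
          · omega
          · exact absurd h' hne
        · exact h
      rcases Nat.lt_or_ge p' p with hp'p | hp'p
      · -- p' < p: (p', m) ∈ D crosses (p, r)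
        have hpm'D : (p', m) ∈ D := by
          rcases hem1 with hs | h
          · rcases hs.2.2 with h' | h' <;> omega
          · exact h
        refine hD.2.2 (p', m) hpm'D (p, r) hprD ?_ (Or.inl (by simp only; omega))
        intro hEq; rw [Prod.ext_iff] at hEq; simp only at hEq; omega
      · -- p' = p, so r < r'
        have hp'eq : p' = p := by omega
        have hrr' : r < r' := by
          rcases Nat.lt_or_ge r r' with h | h
          · exact h
          · exfalso; exact hne' ⟨hp'eq, by omega⟩
        have hmr'D : (m, r') ∈ D := by
          rcases hem2 with hs | h
          · rcases hs.2.2 with h' | h' <;> omega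
          · exact h
        refine hD.2.2 (p, r) hprD (m, r') hmr'D ?_ (Or.inl (by simp only; omega))
        intro hEq; rw [Prod.ext_iff] at hEq; simp only at hEq; omega
    · -- m = r
      subst hmr
      by_cases hp'p : p' = p
      · subst hp'p
        exact ⟨r', Or.inr ⟨hm2, hem2, he'⟩⟩
      · exact absurd ⟨p', m, hp'le, le_refl m, hem1, by omega, rfl⟩ (hmin (m - p') (by omega))
    · -- r < m
      exact absurd ⟨p', m, hp'le, by omega, hem1, by omega, rfl⟩ (hmin (m - p') (by omega))

noncomputable def sdef (u : ℕ × ℕ → ℝ) (p q : ℕ) : ℝ := ∑ i ∈ Finset.Ioc p q, u (i - 1, i)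

lemma sdef_add (u : ℕ × ℕ → ℝ) {p q r : ℕ} (h1 : p ≤ q) (h2 : q ≤ r) :
    sdef u p r = sdef u p q + sdef u q r := (Finset.sum_Ioc_consecutive _ h1 h2).symm

lemma sdef_single (u : ℕ × ℕ → ℝ) (p : ℕ) : sdef u p (p + 1) = u (p, p + 1) := by
  unfold sdef
  rw [show Finset.Ioc p (p + 1) = {p + 1} from by ext x; simp only [Finset.mem_Ioc, Finset.mem_singleton]; omega]
  simp

lemma int_ge_one {x : ℝ} (h : ∃ m : ℤ, x = (m : ℝ)) (hx : 0 < x) : 1 ≤ x := by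
  obtain ⟨m, rfl⟩ := h
  have h1 : 0 < m := by exact_mod_cast hx
  have h2 : (1 : ℤ) ≤ m := h1
  exact_mod_cast h2

/-- Unique interior lattice point of the moment polytope `Δ_Γ` (with the normalization
`|r| = n`): if `u` satisfies the strict triangle inequalities of the triangulation, the
side lengths sum to `n`, each `2 * u(e_i)` (`i = 1, …, n-1`) is an integer, and for every
diagonal `δ` the quantity `(∑_{i ∈ I_δ} u(e_i)) - u(δ)` is an integer, then `u(a) = 1`
for every edge `a` of the triangulation. Here `e_i = (i-1, i)` for `i = 1, …, n-1`,
`e_n = (0, n-1)`, and `I_δ = {p+1, …, q}` for a diagonal `δ = (p, q)`. -/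
theorem unique_interior_lattice_point (n : ℕ) (hn : 3 ≤ n)
    (D : Finset (ℕ × ℕ)) (hD : IsTriangulation n D) (u : ℕ × ℕ → ℝ)
    (hstrict : ∀ p q r : ℕ, IsTriangleOf n D p q r →
      |u (p, q) - u (q, r)| < u (p, r) ∧ u (p, r) < u (p, q) + u (q, r))
    (hsum : (∑ i ∈ Finset.range (n - 1), u (i, i + 1)) + u (0, n - 1) = (n : ℝ))
    (hhalf : ∀ i : ℕ, 1 ≤ i → i ≤ n - 1 → ∃ m : ℤ, 2 * u (i - 1, i) = (m : ℝ))
    (hdiag : ∀ d ∈ D,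
      ∃ m : ℤ, (∑ i ∈ Finset.Icc (d.1 + 1) d.2, u (i - 1, i)) - u d = (m : ℝ)) :
    ∀ p q : ℕ, IsEdge n D p q → u (p, q) = 1 := by
  have hedge : ∀ {p q : ℕ}, IsEdge n D p q → p < q ∧ q < n := fun h => edge_lt' hD h
  have hIocRange : ∀ k : ℕ, sdef u 0 k = ∑ i ∈ Finset.range k, u (i, i + 1) := by
    intro k
    induction k with
    | zero => simp [sdef]
    | succ k ihk =>
      unfold sdef at *
      rw [Finset.sum_Ioc_succ_top (Nat.zero_le k), ihk, Finset.sum_range_succ]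
      simp
  have hs0 : sdef u 0 (n - 1) = (n : ℝ) - u (0, n - 1) := by
    rw [hIocRange]; linarith [hsum]
  choose! gf hgf using hhalf
  have hint2s : ∀ p q : ℕ, q ≤ n - 1 → ∃ m : ℤ, 2 * sdef u p q = (m : ℝ) := by
    intro p q hq
    refine ⟨∑ i ∈ Finset.Ioc p q, gf i, ?_⟩
    unfold sdef
    rw [Finset.mul_sum]
    push_cast
    apply Finset.sum_congr rfl
    intro i hi
    rw [Finset.mem_Ioc] at hi
    exact hgf i (by omega) (by omega)
  have hintk : ∀ p q : ℕ, IsEdge n D p q → ∃ m : ℤ, sdef u p q - u (p, q) = (m : ℝ) := by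
    intro p q he
    rcases he with hs | hd
    · obtain ⟨hpq, hqn, hside⟩ := hs
      rcases hside with h' | ⟨h1, h2⟩
      · subst h'
        exact ⟨0, by rw [sdef_single]; simp⟩
      · subst h1; subst h2
        obtain ⟨m, hm⟩ := hint2s 0 (n - 1) le_rfl
        exact ⟨m - n, by push_cast; linarith [hm, hs0]⟩
    · have h := hdiag (p, q) hd
      rw [show ((p, q).1 + 1) = p + 1 from rfl, show ((p, q).2) = q from rfl,
        Finset.Icc_add_one_left_eq_Ioc] at h
      exact h
  have hint2u : ∀ p q : ℕ, IsEdge n D p q → ∃ m : ℤ, 2 * u (p, q) = (m : ℝ) := by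
    intro p q he
    obtain ⟨k, hk⟩ := hintk p q he
    obtain ⟨t, ht⟩ := hint2s p q (by have := hedge he; omega)
    exact ⟨t - 2 * k, by push_cast; linarith⟩
  have hgapC : ∀ p q r : ℕ, p < q → q < r → IsEdge n D p q → IsEdge n D q r → IsEdge n D p r →
      ∃ m : ℤ, u (p, q) + u (q, r) - u (p, r) = (m : ℝ) := by
    intro p q r h1 h2 e1 e2 e3
    obtain ⟨m1, hm1⟩ := hintk p q e1
    obtain ⟨m2, hm2⟩ := hintk q r e2
    obtain ⟨m3, hm3⟩ := hintk p r e3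
    have hadd := sdef_add u (le_of_lt h1) (le_of_lt h2)
    exact ⟨m3 - m1 - m2, by push_cast; linarith⟩
  have hgap : ∀ p q r : ℕ, p < q → q < r → IsEdge n D p q → IsEdge n D q r → IsEdge n D p r →
      1 ≤ u (p, q) + u (q, r) - u (p, r) ∧ 1 ≤ u (p, q) + u (p, r) - u (q, r) ∧
        1 ≤ u (q, r) + u (p, r) - u (p, q) := by
    intro p q r h1 h2 e1 e2 e3
    obtain ⟨habs, hlt⟩ := hstrict p q r ⟨h1, h2, e1, e2, e3⟩
    have habs' := abs_lt.mp habs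
    obtain ⟨mC, hmC⟩ := hgapC p q r h1 h2 e1 e2 e3
    obtain ⟨t1, ht1⟩ := hint2u p q e1
    obtain ⟨t2, ht2⟩ := hint2u q r e2
    obtain ⟨t3, ht3⟩ := hint2u p r e3
    refine ⟨int_ge_one ⟨mC, hmC⟩ (by linarith),
            int_ge_one ⟨mC + t3 - t2, by push_cast; linarith⟩ (by linarith [habs'.1]),
            int_ge_one ⟨mC + t3 - t1, by push_cast; linarith⟩ (by linarith [habs'.2])⟩
  have hC1 : ∀ L p q : ℕ, q ≤ p + L → IsEdge n D p q →
      (q : ℝ) - p - 1 ≤ sdef u p q - u (p, q) := by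
    intro L
    induction L with
    | zero => intro p q hle he; exact absurd (hedge he).1 (by omega)
    | succ L ihL =>
      intro p q hle he
      have hpq := hedge he
      by_cases hq1 : q = p + 1
      · subst hq1
        rw [sdef_single]
        push_cast
        linarith
      · obtain ⟨m, hm1, hm2, he1, he2⟩ := exists_split hD he (by omega)
        have g1 := ihL p m (by omega) he1
        have g2 := ihL m q (by omega) he2
        have gap := (hgap p m q hm1 hm2 he1 he2 he).1
        have hadd := sdef_add u (le_of_lt hm1) (le_of_lt hm2)
        linarith
  have hC2 : ∀ L p q : ℕ, n - 1 - (q - p) ≤ L → IsEdge n D p q →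
      (n : ℝ) - ((q : ℝ) - p) - 1 ≤ ((n : ℝ) - sdef u p q) - u (p, q) := by
    intro L
    induction L with
    | zero =>
      intro p q hle he
      have hpq := hedge he
      have hb1 : p = 0 := by omega
      have hb2 : q = n - 1 := by omega
      subst hb1; subst hb2
      rw [hs0]
      have hcast : ((n - 1 : ℕ) : ℝ) = (n : ℝ) - 1 := by
        rw [Nat.cast_sub (by omega : 1 ≤ n), Nat.cast_one]
      rw [hcast]
      push_cast
      linarith
    | succ L ihL =>
      intro p q hle he
      have hpq := hedge he
      by_cases hbase : p = 0 ∧ q = n - 1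
      · obtain ⟨hb1, hb2⟩ := hbase
        subst hb1; subst hb2
        rw [hs0]
        have hcast : ((n - 1 : ℕ) : ℝ) = (n : ℝ) - 1 := by
          rw [Nat.cast_sub (by omega : 1 ≤ n), Nat.cast_one]
        rw [hcast]
        push_cast
        linarith
      · obtain ⟨w, hw⟩ := exists_outer hn hD he hbase
        rcases hw with ⟨hwp, e1, e2⟩ | ⟨hrw, e1, e2⟩
        · have hwq := hedge e2
          have g1 := hC1 p w p (by omega) e1
          have g2 := ihL w q (by omega) e2
          have gap := (hgap w p q hwp hpq.1 e1 he e2).2.1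
          have hadd := sdef_add u (le_of_lt hwp) (le_of_lt hpq.1)
          linarith
        · have hpw := hedge e2
          have g1 := hC1 w q w (by omega) e1
          have g2 := ihL p w (by omega) e2
          have gap := (hgap p q w hpq.1 hrw he e1 e2).2.2
          have hadd := sdef_add u (le_of_lt hpq.1) (le_of_lt hrw)
          linarith
  have hule : ∀ p q : ℕ, IsEdge n D p q → u (p, q) ≤ 1 := by
    intro p q he
    have hpq := hedge he
    have g1 := hC1 q p q (by omega) he
    have g2 := hC2 n p q (by omega) he
    linarith
  have hside_e : ∀ i : ℕ, i < n - 1 → IsEdge n D i (i + 1) :=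
    fun i hi => Or.inl ⟨by omega, by omega, Or.inl rfl⟩
  have hen_e : IsEdge n D 0 (n - 1) := Or.inl ⟨by omega, by omega, Or.inr ⟨rfl, rfl⟩⟩
  have hcastn : ((n - 1 : ℕ) : ℝ) = (n : ℝ) - 1 := by
    rw [Nat.cast_sub (by omega : 1 ≤ n), Nat.cast_one]
  have hsum_le : ∑ i ∈ Finset.range (n - 1), u (i, i + 1) ≤ (n : ℝ) - 1 := by
    calc ∑ i ∈ Finset.range (n - 1), u (i, i + 1) ≤ ∑ i ∈ Finset.range (n - 1), (1 : ℝ) :=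
        Finset.sum_le_sum (fun i hi => hule i (i + 1) (hside_e i (Finset.mem_range.mp hi)))
      _ = ((n - 1 : ℕ) : ℝ) := by simp
      _ = (n : ℝ) - 1 := hcastn
  have hen1 : u (0, n - 1) = 1 := by
    have := hule 0 (n - 1) hen_e
    linarith [hsum]
  have hsum_eq : ∑ i ∈ Finset.range (n - 1), u (i, i + 1) = (n : ℝ) - 1 := by
    linarith [hsum]
  have heach : ∀ i ∈ Finset.range (n - 1), u (i, i + 1) = 1 := by
    have hnn : ∀ i ∈ Finset.range (n - 1), 0 ≤ 1 - u (i, i + 1) :=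
      fun i hi => by linarith [hule i (i + 1) (hside_e i (Finset.mem_range.mp hi))]
    have hzero : ∑ i ∈ Finset.range (n - 1), (1 - u (i, i + 1)) = 0 := by
      rw [Finset.sum_sub_distrib, hsum_eq, Finset.sum_const, Finset.card_range,
        nsmul_eq_mul, mul_one, hcastn]
      ring
    intro i hi
    have := (Finset.sum_eq_zero_iff_of_nonneg hnn).mp hzero i hi
    linarith
  have husides : ∀ i : ℕ, 1 ≤ i → i ≤ n - 1 → u (i - 1, i) = 1 := by
    intro i h1 h2
    have hmem : i - 1 ∈ Finset.range (n - 1) := Finset.mem_range.mpr (by omega)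
    have := heach (i - 1) hmem
    rwa [show i - 1 + 1 = i from by omega] at this
  have hfinal : ∀ L p q : ℕ, q ≤ p + L → IsEdge n D p q → u (p, q) = 1 := by
    intro L
    induction L with
    | zero => intro p q hle he; exact absurd (hedge he).1 (by omega)
    | succ L ihL =>
      intro p q hle he
      have hpq := hedge he
      by_cases hq1 : q = p + 1
      · subst hq1
        have := husides (p + 1) (by omega) (by omega)
        simpa using this
      · obtain ⟨m, hm1, hm2, he1, he2⟩ := exists_split hD he (by omega)
        have u1 := ihL p m (by omega) he1
        have u2 := ihL m q (by omega) he2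
        have hle1 := hule p q he
        have habs := (hstrict p m q ⟨hm1, hm2, he1, he2, he⟩).1
        rw [u1, u2] at habs
        simp only [sub_self, abs_zero] at habs
        obtain ⟨mz, hmz⟩ := hgapC p m q hm1 hm2 he1 he2 he
        rw [u1, u2] at hmz
        have h1z : (1 : ℤ) ≤ mz := by
          have : (1 : ℝ) ≤ (mz : ℝ) := by linarith
          exact_mod_cast this
        have h2z : mz < 2 := by
          have : (mz : ℝ) < 2 := by linarith
          exact_mod_cast this
        have hmz1 : mz = 1 := by omega
        rw [hmz1] at hmz
        push_cast at hmz
        linarith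
  intro p q he
  exact hfinal q p q (by omega) he
end

section
/- Let Γ1 and Γ2 be triangulations of the n-gon related by a Whitehead move: there are vertices p<q<r<s such that a1={p,q}, a2={q,r}, a3={r,s}, a4={p,s} are edges of Γ1, the diagonal d={p,r} belongs to D1, d′={q,s}, and D2=(D1∖{d})∪{d′} is again a set of n−3 pairwise non-crossing diagonals. Let u be a function from the edges of Γ1 to ℝ such that: (i) 2·u(e_i) is an integer for i = 1,…,n−1; (ii) u(e_1)+⋯+u(e_n) is an integer; and (iii) for every diagonal δ ∈ D1, the number (Σ_{i ∈ I_δ} u(e_i)) − u(δ) is an integer. Set u(d′) = u(d) − min(u(a1)+u(a2), u(a3)+u(a4)) + min(u(a1)+u(a4), u(a2)+u(a3)). Then (Σ_{i ∈ I_{d′}} u(e_i)) − u(d′) is an integer. -/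
open Classical

/-!
Write `S(a) = ∑_{i ∈ I_a} u(e_i)` and `v(a) = S(a) - u(a)`; `v` is integral on every edge of `Γ1`
(on `e_n` because `v(e_n) = 2 S(e_n) - (perimeter)`). The arguments of each minimum differ by
`± 2 S` of a side arc plus lattice coordinates, so each minimum is congruent modulo `ℤ` to either
argument. Taking `u(a1) + u(a2)` and `u(a1) + u(a4)`, the quantity to test becomes
`v(d) - v(a2) + v(a4) - 2 S(a1)`.
-/

lemma min_sub_mem_of_sub_mem {α : Type*} [AddGroup α] [LinearOrder α] {G : AddSubgroup α}
    {a b : α} (h : b - a ∈ G) : min a b - a ∈ G := by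
  rcases min_cases a b with ⟨hmin, -⟩ | ⟨hmin, -⟩ <;> rw [hmin]
  · simp
  · exact h

/-- For a quadrilateral `p < q < r < s`: `S₁, S₂, S₃` are the sums of `u(e_i)` over the arcs
`I_{(p,q)}, I_{(q,r)}, I_{(r,s)}`, `u₁, …, u₄` the values on `a1, …, a4` and `u` the value on
`d = {p, r}`. -/
lemma quadrilateral_sub_mem {α : Type*} [AddCommGroup α] [LinearOrder α] {G : AddSubgroup α}
    {S₁ S₂ S₃ u₁ u₂ u₃ u₄ u : α}
    (h₁ : S₁ - u₁ ∈ G) (h₂ : S₂ - u₂ ∈ G) (h₃ : S₃ - u₃ ∈ G) (h₄ : S₁ + S₂ + S₃ - u₄ ∈ G)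
    (hd : S₁ + S₂ - u ∈ G) (hS₁ : 2 • S₁ ∈ G) (hS₃ : 2 • S₃ ∈ G) :
    S₂ + S₃ - (u - min (u₁ + u₂) (u₃ + u₄) + min (u₁ + u₄) (u₂ + u₃)) ∈ G := by
  have hmin₁ : min (u₁ + u₂) (u₃ + u₄) - (u₁ + u₂) ∈ G := by
    refine min_sub_mem_of_sub_mem ?_
    convert G.sub_mem (G.sub_mem (G.add_mem (G.add_mem hS₃ h₁) h₂) h₃) h₄ using 1
    abel
  have hmin₂ : min (u₁ + u₄) (u₂ + u₃) - (u₁ + u₄) ∈ G := by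
    refine min_sub_mem_of_sub_mem ?_
    convert G.add_mem (G.sub_mem (G.sub_mem (G.sub_mem h₁ hS₁) h₂) h₃) h₄ using 1
    abel
  convert G.add_mem (G.sub_mem hmin₁ hmin₂)
    (G.add_mem (G.sub_mem (G.sub_mem hd hS₁) h₂) h₄) using 1
  abel

/-- `arcSum u a b = ∑_{i ∈ I_{(a,b)}} u(e_i)`. -/
def arcSum (u : ℕ × ℕ → ℝ) (a b : ℕ) : ℝ :=
  ∑ i ∈ Finset.Ioc a b, u (i - 1, i)

lemma arcSum_add_arcSum (u : ℕ × ℕ → ℝ) {a b c : ℕ} (hab : a ≤ b) (hbc : b ≤ c) :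
    arcSum u a b + arcSum u b c = arcSum u a c :=
  Finset.sum_Ioc_consecutive _ hab hbc

lemma sum_range_eq_arcSum (u : ℕ × ℕ → ℝ) (n : ℕ) :
    ∑ i ∈ Finset.range n, u (i, i + 1) = arcSum u 0 n := by
  rw [arcSum, ← Finset.Ico_add_one_add_one_eq_Ioc, Finset.range_eq_Ico,
    ← Finset.sum_Ico_add' (fun i ↦ u (i - 1, i))]
  simp

lemma mem_zmultiples_one_iff {R : Type*} [Ring R] {x : R} :
    x ∈ AddSubgroup.zmultiples (1 : R) ↔ ∃ m : ℤ, x = m := by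
  simp [AddSubgroup.mem_zmultiples_iff, eq_comm]

section

variable {n : ℕ} {u : ℕ × ℕ → ℝ}

lemma two_nsmul_arcSum_mem
    (hhalf : ∀ i : ℕ, 1 ≤ i → i ≤ n - 1 → ∃ m : ℤ, 2 * u (i - 1, i) = (m : ℝ))
    (a : ℕ) {b : ℕ} (hb : b < n) : 2 • arcSum u a b ∈ AddSubgroup.zmultiples (1 : ℝ) := by
  rw [arcSum, Finset.smul_sum]
  refine AddSubgroup.sum_mem _ fun i hi ↦ ?_
  obtain ⟨m, hm⟩ := hhalf i (by grind) (by grind)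
  exact mem_zmultiples_one_iff.2 ⟨m, by rw [two_nsmul, ← two_mul, hm]⟩

lemma IsEdge.snd_lt {D : Finset (ℕ × ℕ)} (hD : ∀ d ∈ D, IsDiag n d.1 d.2) {x y : ℕ}
    (h : IsEdge n D x y) : y < n := by
  rcases h with h | h
  exacts [h.2.1, (hD _ h).2.1]

lemma arcSum_sub_mem_of_isEdge {D : Finset (ℕ × ℕ)}
    (hhalf : ∀ i : ℕ, 1 ≤ i → i ≤ n - 1 → ∃ m : ℤ, 2 * u (i - 1, i) = (m : ℝ))
    (hper : ∃ m : ℤ,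
      (∑ i ∈ Finset.range (n - 1), u (i, i + 1)) + u (0, n - 1) = (m : ℝ))
    (hdiag : ∀ d ∈ D,
      ∃ m : ℤ, (∑ i ∈ Finset.Icc (d.1 + 1) d.2, u (i - 1, i)) - u d = (m : ℝ))
    {x y : ℕ} (h : IsEdge n D x y) :
    arcSum u x y - u (x, y) ∈ AddSubgroup.zmultiples (1 : ℝ) := by
  rcases h with ⟨-, hyn, rfl | ⟨rfl, rfl⟩⟩ | hd
  · simp [arcSum]
  · rw [sum_range_eq_arcSum] at hper
    obtain ⟨m, hm⟩ := hper
    convert AddSubgroup.sub_mem _ (two_nsmul_arcSum_mem hhalf 0 hyn)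
      (mem_zmultiples_one_iff.2 ⟨m, hm⟩) using 1
    rw [two_nsmul]
    ring
  · simpa [mem_zmultiples_one_iff, arcSum, Finset.Icc_add_one_left_eq_Ioc] using hdiag _ hd

end

theorem whitehead_move_defined_over_int_general (n : ℕ)
    (D1 : Finset (ℕ × ℕ)) (hD1 : IsTriangulation n D1)
    (p q r s : ℕ) (hpq : p < q) (hqr : q < r) (hrs : r < s)
    (ha1 : IsEdge n D1 p q) (ha2 : IsEdge n D1 q r)
    (ha3 : IsEdge n D1 r s) (ha4 : IsEdge n D1 p s)
    (hd : (p, r) ∈ D1)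
    (u : ℕ × ℕ → ℝ)
    (hhalf : ∀ i : ℕ, 1 ≤ i → i ≤ n - 1 → ∃ m : ℤ, 2 * u (i - 1, i) = (m : ℝ))
    (hper : ∃ m : ℤ,
      (∑ i ∈ Finset.range (n - 1), u (i, i + 1)) + u (0, n - 1) = (m : ℝ))
    (hdiag : ∀ d ∈ D1,
      ∃ m : ℤ, (∑ i ∈ Finset.Icc (d.1 + 1) d.2, u (i - 1, i)) - u d = (m : ℝ)) :
    ∃ m : ℤ,
      (∑ i ∈ Finset.Icc (q + 1) s, u (i - 1, i)) -
        (u (p, r) - min (u (p, q) + u (q, r)) (u (r, s) + u (p, s))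
          + min (u (p, q) + u (p, s)) (u (q, r) + u (r, s))) = (m : ℝ) := by
  have hedge {x y : ℕ} (h : IsEdge n D1 x y) := arcSum_sub_mem_of_isEdge hhalf hper hdiag h
  have hps : arcSum u p s = arcSum u p q + arcSum u q r + arcSum u r s := by
    rw [arcSum_add_arcSum u hpq.le hqr.le, arcSum_add_arcSum u (hpq.trans hqr).le hrs.le]
  have hpr : arcSum u p r = arcSum u p q + arcSum u q r :=
    (arcSum_add_arcSum u hpq.le hqr.le).symm
  rw [← mem_zmultiples_one_iff, Finset.Icc_add_one_left_eq_Ioc]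
  change arcSum u q s - _ ∈ _
  rw [← arcSum_add_arcSum u hqr.le hrs.le]
  exact quadrilateral_sub_mem (hedge ha1) (hedge ha2) (hedge ha3) (hps ▸ hedge ha4)
    (hpr ▸ hedge (Or.inr hd)) (two_nsmul_arcSum_mem hhalf p (ha1.snd_lt hD1.2.1))
    (two_nsmul_arcSum_mem hhalf r (ha3.snd_lt hD1.2.1))

/-- The piecewise-linear transformation associated to a Whitehead move is defined over `ℤ`
with respect to the lattice coordinates: if `Γ1` and `Γ2` are triangulations related by a
Whitehead move replacing the diagonal `d = {p, r}` by `d' = {q, s}` (in the quadrilateral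
with sides `a1 = {p,q}`, `a2 = {q,r}`, `a3 = {r,s}`, `a4 = {p,s}`), and `u` is a function
on the edges of `Γ1` such that each `2 * u(e_i)` (`i = 1, …, n-1`) is an integer, the
total perimeter `u(e_1) + ⋯ + u(e_n)` is an integer, and `(∑_{i ∈ I_δ} u(e_i)) - u(δ)`
is an integer for every diagonal `δ ∈ D1`, then, setting
`u(d') = u(d) - min (u(a1)+u(a2)) (u(a3)+u(a4)) + min (u(a1)+u(a4)) (u(a2)+u(a3))`,
the quantity `(∑_{i ∈ I_{d'}} u(e_i)) - u(d')` is an integer. Here `e_i = (i-1, i)` for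
`i = 1, …, n-1`, `e_n = (0, n-1)`, and `I_δ = {p+1, …, q}` for `δ = (p, q)`. -/
theorem whitehead_move_defined_over_int (n : ℕ) (hn : 4 ≤ n)
    (D1 : Finset (ℕ × ℕ)) (hD1 : IsTriangulation n D1)
    (p q r s : ℕ) (hpq : p < q) (hqr : q < r) (hrs : r < s)
    (ha1 : IsEdge n D1 p q) (ha2 : IsEdge n D1 q r)
    (ha3 : IsEdge n D1 r s) (ha4 : IsEdge n D1 p s)
    (hd : (p, r) ∈ D1)
    (hD2 : IsTriangulation n (D1.erase (p, r) ∪ {(q, s)}))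
    (u : ℕ × ℕ → ℝ)
    (hhalf : ∀ i : ℕ, 1 ≤ i → i ≤ n - 1 → ∃ m : ℤ, 2 * u (i - 1, i) = (m : ℝ))
    (hper : ∃ m : ℤ,
      (∑ i ∈ Finset.range (n - 1), u (i, i + 1)) + u (0, n - 1) = (m : ℝ))
    (hdiag : ∀ d ∈ D1,
      ∃ m : ℤ, (∑ i ∈ Finset.Icc (d.1 + 1) d.2, u (i - 1, i)) - u d = (m : ℝ)) :
    ∃ m : ℤ,
      (∑ i ∈ Finset.Icc (q + 1) s, u (i - 1, i)) -
        (u (p, r) - min (u (p, q) + u (q, r)) (u (r, s) + u (p, s))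
          + min (u (p, q) + u (p, s)) (u (q, r) + u (r, s))) = (m : ℝ) :=
  whitehead_move_defined_over_int_general n D1 hD1 p q r s hpq hqr hrs ha1 ha2 ha3 ha4 hd u hhalf
    hper hdiag
end

section
/- Let y, y1, y2, y3, y4 be positive real numbers and set y′ = y·(y1·y4 + y2·y3)/(y1·y2 + y3·y4). Then y·(y1/y2 + y2/y1 + y3/y4 + y4/y3) + (y1·y2 + y3·y4)/y = y′·(y1/y4 + y4/y1 + y2/y3 + y3/y2) + (y1·y4 + y2·y3)/y′. -/
/-- The potential functions associated to two triangulations related by a single Whitehead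
move are transformed into one another by the subtraction-free rational change of variables
`y' = y * (y1*y4 + y2*y3) / (y1*y2 + y3*y4)`. -/
theorem potential_geometric_lift (y y1 y2 y3 y4 y' : ℝ)
    (hy : 0 < y) (h1 : 0 < y1) (h2 : 0 < y2) (h3 : 0 < y3) (h4 : 0 < y4)
    (hy' : y' = y * (y1 * y4 + y2 * y3) / (y1 * y2 + y3 * y4)) :
    y * (y1 / y2 + y2 / y1 + y3 / y4 + y4 / y3) + (y1 * y2 + y3 * y4) / y =
      y' * (y1 / y4 + y4 / y1 + y2 / y3 + y3 / y2) + (y1 * y4 + y2 * y3) / y' := by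
  have hA : (0:ℝ) < y1 * y4 + y2 * y3 := by positivity
  have hB : (0:ℝ) < y1 * y2 + y3 * y4 := by positivity
  subst hy'
  field_simp
  ring
end

section
/- Let n ≥ 3 and let r_1, …, r_n be positive real numbers such that r_i < r_1 + ⋯ + r_{i−1} + r_{i+1} + ⋯ + r_n for every i = 1, …, n. Then there exist vectors x_1, …, x_n in Euclidean 3-space ℝ³ with ‖x_i‖ = r_i for every i and x_1 + ⋯ + x_n = 0. -/
open Finset

/-- Greedy sign assignment: if all values lie in `[0, a]`, signs can be chosen so the
signed sum has absolute value at most `a`. -/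
lemma polygon_sign_lemma {ι : Type*} [DecidableEq ι] (a : ℝ) (ha : 0 ≤ a)
    (s : Finset ι) (f : ι → ℝ) (h : ∀ i ∈ s, 0 ≤ f i ∧ f i ≤ a) :
    ∃ ε : ι → ℝ, (∀ i, ε i = 1 ∨ ε i = -1) ∧ |∑ i ∈ s, ε i * f i| ≤ a := by
  classical
  induction s using Finset.induction_on with
  | empty => exact ⟨fun _ => 1, fun _ => Or.inl rfl, by simpa using ha⟩
  | @insert j s hj ih =>
    obtain ⟨ε, hε, hsum⟩ := ih (fun i hi => h i (mem_insert_of_mem hi))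
    set S := ∑ i ∈ s, ε i * f i with hS
    set c : ℝ := if 0 ≤ S then -1 else 1 with hc
    refine ⟨Function.update ε j c, ?_, ?_⟩
    · intro i
      rcases eq_or_ne i j with rfl | hij
      · rw [Function.update_self, hc]; split <;> simp
      · simpa [Function.update_of_ne hij] using hε i
    · rw [Finset.sum_insert hj, Function.update_self,
        Finset.sum_congr rfl
          (fun i hi => by rw [Function.update_of_ne (by rintro rfl; exact hj hi)])]
      have hfj := h j (mem_insert_self j s)
      rw [abs_le] at hsum ⊢
      rw [hc]
      split_ifs with h0 <;> constructor <;> nlinarith [hsum.1, hsum.2, hfj.1, hfj.2]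

/-- Nonemptiness of the polygon space: if each `r i` is positive and strictly smaller than
the sum of the other side lengths, then there is a closed polygon in Euclidean 3-space
with side lengths `r 1, …, r n`. -/
theorem polygon_space_nonempty (n : ℕ) (hn : 3 ≤ n) (r : Fin n → ℝ)
    (hpos : ∀ i, 0 < r i)
    (hlt : ∀ i, r i < ∑ j ∈ Finset.univ.erase i, r j) :
    ∃ x : Fin n → EuclideanSpace ℝ (Fin 3),
      (∀ i, ‖x i‖ = r i) ∧ ∑ i, x i = 0 := by
  classical
  have hne : (Finset.univ : Finset (Fin n)).Nonempty :=
    ⟨⟨0, by omega⟩, Finset.mem_univ _⟩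
  obtain ⟨i0, -, hmax⟩ := Finset.exists_max_image Finset.univ r hne
  set a := r i0 with hadef
  have ha : 0 < a := hpos i0
  obtain ⟨ε, hε, hd⟩ := polygon_sign_lemma a ha.le (Finset.univ.erase i0) r
    (fun i _ => ⟨(hpos i).le, hmax i (Finset.mem_univ i)⟩)
  set d := ∑ i ∈ Finset.univ.erase i0, ε i * r i with hdd
  set S : ℝ := ∑ i ∈ Finset.univ.erase i0, r i with hSS
  have haS : a < S := hlt i0
  have habs := abs_le.mp hd
  have hd2 : d ^ 2 ≤ a ^ 2 := by nlinarith [habs.1, habs.2]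
  have hden : 0 < S ^ 2 - d ^ 2 := by nlinarith
  set t : ℝ := (a ^ 2 - d ^ 2) / (S ^ 2 - d ^ 2) with ht
  have ht0 : 0 ≤ t := div_nonneg (by nlinarith) hden.le
  have ht1 : t ≤ 1 := by rw [div_le_one hden]; nlinarith
  set p := Real.sqrt t with hpdef
  set q := Real.sqrt (1 - t) with hqdef
  have hp2 : p ^ 2 = t := Real.sq_sqrt ht0
  have hq2 : q ^ 2 = 1 - t := Real.sq_sqrt (by linarith)
  have h1 : (S ^ 2 - d ^ 2) * t = a ^ 2 - d ^ 2 := by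
    rw [ht]; field_simp
  have hkey : S ^ 2 * t + d ^ 2 * (1 - t) = a ^ 2 := by linear_combination h1
  set x : Fin n → EuclideanSpace ℝ (Fin 3) := fun i =>
    if i = i0 then (WithLp.equiv 2 _).symm ![-(S * p), -(d * q), 0]
    else (WithLp.equiv 2 _).symm ![r i * p, ε i * r i * q, 0] with hx
  have happ : ∀ (v : Fin 3 → ℝ) (j : Fin 3), ((WithLp.equiv 2 (Fin 3 → ℝ)).symm v) j = v j :=
    fun v j => rfl
  have hsum_apply : ∀ (s : Finset (Fin n)) (f : Fin n → EuclideanSpace ℝ (Fin 3)) (j : Fin 3),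
      (∑ i ∈ s, f i) j = ∑ i ∈ s, f i j := by
    intro s f j
    exact map_sum (EuclideanSpace.projₗ j) f s
  have hx0 : x i0 = (WithLp.equiv 2 (Fin 3 → ℝ)).symm ![-(S * p), -(d * q), 0] := by
    rw [hx]; simp
  have hxo : ∀ i, i ≠ i0 →
      x i = (WithLp.equiv 2 (Fin 3 → ℝ)).symm ![r i * p, ε i * r i * q, 0] := by
    intro i hi
    rw [hx]
    simp only [if_neg hi]
  refine ⟨x, ?_, ?_⟩
  · intro i
    rcases eq_or_ne i i0 with rfl | hi
    · rw [hx0, EuclideanSpace.norm_eq]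
      simp only [happ, Fin.sum_univ_three, Matrix.cons_val_zero, Matrix.cons_val_one,
        Matrix.head_cons, Matrix.cons_val_two, Matrix.tail_cons, norm_neg,
        Real.norm_eq_abs, sq_abs]
      rw [show (-(S * p)) ^ 2 + (-(d * q)) ^ 2 + (0:ℝ) ^ 2 = a ^ 2 by
        rw [neg_sq, neg_sq, mul_pow, mul_pow, hp2, hq2]; linear_combination hkey]
      exact Real.sqrt_sq ha.le
    · rw [hxo i hi, EuclideanSpace.norm_eq]
      simp only [happ, Fin.sum_univ_three, Matrix.cons_val_zero, Matrix.cons_val_one,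
        Matrix.head_cons, Matrix.cons_val_two, Matrix.tail_cons,
        Real.norm_eq_abs, sq_abs]
      have hεi : ε i ^ 2 = 1 := by rcases hε i with h | h <;> rw [h] <;> norm_num
      rw [show (r i * p) ^ 2 + (ε i * r i * q) ^ 2 + (0:ℝ) ^ 2 = r i ^ 2 by
        rw [mul_pow, mul_pow, mul_pow, hp2, hq2]
        linear_combination (r i ^ 2 * (1 - t)) * hεi]
      exact Real.sqrt_sq (hpos i).le
  · apply PiLp.ext
    intro j
    rw [← Finset.add_sum_erase _ x (Finset.mem_univ i0), PiLp.add_apply, hx0,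
      hsum_apply, Finset.sum_congr rfl (fun i hi => by rw [hxo i (Finset.ne_of_mem_erase hi)])]
    simp only [happ]
    have hz : (0 : EuclideanSpace ℝ (Fin 3)) j = 0 := rfl
    rw [hz]
    fin_cases j
    · show -(S * p) + ∑ i ∈ Finset.univ.erase i0, r i * p = 0
      rw [← Finset.sum_mul, ← hSS]; ring
    · show -(d * q) + ∑ i ∈ Finset.univ.erase i0, ε i * r i * q = 0
      rw [← Finset.sum_mul, ← hdd]; ring
    · show (0:ℝ) + ∑ i ∈ Finset.univ.erase i0, (0:ℝ) = 0
      simp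
end

section
/- Let A, B, C be finite types and consider the multivariate polynomial ring R = MvPolynomial (A ⊕ B ⊕ C) ℂ, with variables X_a (a ∈ A), Y_b (b ∈ B), Z_c (c ∈ C). Assign weight 0 to each X_a, weight 1 to each Y_b, and weight −1 to each Z_c, and say a polynomial is invariant if every monomial in its support has total weight 0 (i.e., its total degree in the Y-variables equals its total degree in the Z-variables). Then the set of invariant polynomials equals the ℂ-subalgebra of R generated by the variables X_a (a ∈ A) together with the products Y_b·Z_c (b ∈ B, c ∈ C). -/
/-- The weight of a variable: `0` on the `X`-variables (indexed by `A`), `1` on the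
`Y`-variables (indexed by `B`), and `-1` on the `Z`-variables (indexed by `C`). -/
def torusWeight {A B C : Type*} : A ⊕ B ⊕ C → ℤ :=
  Sum.elim (fun _ => 0) (Sum.elim (fun _ => 1) (fun _ => -1))

open MvPolynomial Finsupp in
private lemma torus_aux_weight {A B C : Type*} [Fintype A] [Fintype B] [Fintype C]
    (m : (A ⊕ B ⊕ C) →₀ ℕ) :
    (Finsupp.weight torusWeight m : ℤ) =
      (∑ b : B, (m (Sum.inr (Sum.inl b)) : ℤ)) - ∑ c : C, (m (Sum.inr (Sum.inr c)) : ℤ) := by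
  rw [Finsupp.weight_apply, Finsupp.sum_fintype _ _ (by simp)]
  simp [Fintype.sum_sum_type, torusWeight, nsmul_eq_mul, sub_eq_add_neg, Finset.sum_neg_distrib]

open MvPolynomial Finsupp in
private lemma torus_monomial_mem {A B C : Type*} [Fintype A] [Fintype B] [Fintype C]
    (N : ℕ) (m : (A ⊕ B ⊕ C) →₀ ℕ) (hN : (∑ b : B, m (Sum.inr (Sum.inl b))) = N)
    (hw : Finsupp.weight torusWeight m = 0) :
    MvPolynomial.monomial m (1 : ℂ) ∈ Algebra.adjoin ℂ
        ((Set.range fun a : A => MvPolynomial.X (R := ℂ) (Sum.inl a)) ∪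
          (Set.range fun bc : B × C =>
            MvPolynomial.X (Sum.inr (Sum.inl bc.1)) *
              MvPolynomial.X (Sum.inr (Sum.inr bc.2)))) := by
  classical
  induction N generalizing m with
  | zero =>
    have hY : ∀ b, m (Sum.inr (Sum.inl b)) = 0 := fun b =>
      (Finset.sum_eq_zero_iff.mp hN) b (Finset.mem_univ b)
    have hZ : ∀ c, m (Sum.inr (Sum.inr c)) = 0 := by
      have h1 := torus_aux_weight m
      rw [hw] at h1
      have h2 : (∑ c : C, (m (Sum.inr (Sum.inr c)) : ℤ)) = 0 := by
        have hb0 : (∑ b : B, (m (Sum.inr (Sum.inl b)) : ℤ)) = 0 := by simp [hY]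
        linarith [h1]
      intro c
      have h3 := (Finset.sum_eq_zero_iff_of_nonneg (fun c _ => by positivity)).mp h2 c
        (Finset.mem_univ c)
      exact_mod_cast h3
    rw [MvPolynomial.monomial_eq]
    simp only [map_one, one_mul]
    rw [Finsupp.prod]
    refine Subalgebra.prod_mem _ fun v hv => Subalgebra.pow_mem _ ?_ _
    apply Algebra.subset_adjoin
    match v with
    | Sum.inl a => exact Or.inl ⟨a, rfl⟩
    | Sum.inr (Sum.inl b) => exact absurd (Finsupp.mem_support_iff.mp hv) (by simp [hY b])
    | Sum.inr (Sum.inr c) => exact absurd (Finsupp.mem_support_iff.mp hv) (by simp [hZ c])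
  | succ n ih =>
    obtain ⟨b, hb⟩ : ∃ b, m (Sum.inr (Sum.inl b)) ≠ 0 := by
      by_contra h; push_neg at h; simp [h] at hN
    have hZsum : (∑ c : C, (m (Sum.inr (Sum.inr c)) : ℤ)) = (n : ℤ) + 1 := by
      have h1 := torus_aux_weight m
      rw [hw] at h1
      have : (∑ b : B, (m (Sum.inr (Sum.inl b)) : ℤ)) = (n : ℤ) + 1 := by
        rw [← Nat.cast_sum, hN]; push_cast; ring
      omega
    obtain ⟨c, hc⟩ : ∃ c, m (Sum.inr (Sum.inr c)) ≠ 0 := by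
      by_contra h; push_neg at h; simp [h] at hZsum; omega
    set vb : A ⊕ B ⊕ C := Sum.inr (Sum.inl b) with hvb
    set vc : A ⊕ B ⊕ C := Sum.inr (Sum.inr c) with hvc
    have hbc : vb ≠ vc := by simp [hvb, hvc]
    have hle : Finsupp.single vb 1 + Finsupp.single vc 1 ≤ m := by
      rw [Finsupp.le_def]
      intro v
      simp only [Finsupp.add_apply, Finsupp.single_apply]
      split_ifs with h1 h2
      · exact absurd (h1.trans h2.symm) hbc
      · subst h1; omega
      · rename_i h2; subst h2; omega
      · omega
    set m' := m - (Finsupp.single vb 1 + Finsupp.single vc 1) with hm'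
    have hm : m' + (Finsupp.single vb 1 + Finsupp.single vc 1) = m :=
      tsub_add_cancel_of_le hle
    have hmv : ∀ v, m v = m' v + ((Finsupp.single vb 1) v + (Finsupp.single vc 1) v) := by
      intro v
      conv_lhs => rw [← hm]
      simp
    have hwsingle : ∀ v : A ⊕ B ⊕ C,
        Finsupp.weight torusWeight (Finsupp.single v 1) = torusWeight v := by
      intro v
      rw [Finsupp.weight_apply, Finsupp.sum_single_index (by simp)]
      simp
    have hw' : Finsupp.weight torusWeight m' = 0 := by
      have := congrArg (Finsupp.weight torusWeight) hm
      rw [map_add, map_add, hwsingle, hwsingle, hw] at this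
      simp [torusWeight, hvb, hvc] at this
      exact this
    have hN' : (∑ b' : B, m' (Sum.inr (Sum.inl b'))) = n := by
      have e1 : (∑ b' : B, m (Sum.inr (Sum.inl b'))) =
          (∑ b' : B, m' (Sum.inr (Sum.inl b'))) +
            ∑ b' : B, ((Finsupp.single vb 1) (Sum.inr (Sum.inl b')) +
              (Finsupp.single vc 1) (Sum.inr (Sum.inl b'))) := by
        rw [← Finset.sum_add_distrib]
        exact Finset.sum_congr rfl fun b' _ => hmv _
      have h1 : (∑ b' : B, ((Finsupp.single vb (1 : ℕ)) (Sum.inr (Sum.inl b')) +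
          (Finsupp.single vc (1 : ℕ)) (Sum.inr (Sum.inl b')))) = 1 := by
        rw [Finset.sum_add_distrib]
        have hz : ∀ b' : B, (Finsupp.single vc (1 : ℕ)) (Sum.inr (Sum.inl b')) = 0 :=
          fun b' => Finsupp.single_eq_of_ne (by simp [hvc])
        simp [hz, hvb, Finsupp.single_apply]
      omega
    have hmon : MvPolynomial.monomial m (1 : ℂ) =
        MvPolynomial.monomial m' 1 * (MvPolynomial.X vb * MvPolynomial.X vc) := by
      rw [MvPolynomial.X, MvPolynomial.X, MvPolynomial.monomial_mul,
        MvPolynomial.monomial_mul, ← add_assoc, add_assoc, hm]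
      norm_num
    rw [hmon]
    exact mul_mem (ih m' hN' hw') (Algebra.subset_adjoin (Or.inr ⟨(b, c), rfl⟩))

/-- The ring of invariants of a polynomial ring under a one-dimensional torus acting with
weights `0`, `+1`, `-1` on the variables is generated by the weight-`0` variables together
with products of one weight-`(+1)` variable and one weight-`(-1)` variable: a polynomial
all of whose monomials have total weight `0` lies in the subalgebra generated by the
`X a` and the `Y b * Z c`, and conversely. -/
theorem torus_invariants_eq_adjoin (A B C : Type*) [Fintype A] [Fintype B] [Fintype C] :
    {p : MvPolynomial (A ⊕ B ⊕ C) ℂ |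
        ∀ m ∈ p.support, (m.sum fun v e => (e : ℤ) * torusWeight v) = 0} =
      ↑(Algebra.adjoin ℂ
        ((Set.range fun a : A => MvPolynomial.X (R := ℂ) (Sum.inl a)) ∪
          (Set.range fun bc : B × C =>
            MvPolynomial.X (Sum.inr (Sum.inl bc.1)) *
              MvPolynomial.X (Sum.inr (Sum.inr bc.2))))) := by
  classical
  have hweq : ∀ m : (A ⊕ B ⊕ C) →₀ ℕ,
      (m.sum fun v e => (e : ℤ) * torusWeight v) = Finsupp.weight torusWeight m := by
    intro m
    rw [Finsupp.weight_apply]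
    exact Finsupp.sum_congr fun v _ => by simp [nsmul_eq_mul]
  ext p
  constructor
  · intro hp
    rw [Set.mem_setOf_eq] at hp
    rw [SetLike.mem_coe, MvPolynomial.as_sum p]
    refine Subalgebra.sum_mem _ fun m hm => ?_
    have : MvPolynomial.monomial m (MvPolynomial.coeff m p) =
        MvPolynomial.coeff m p • MvPolynomial.monomial m 1 := by
      rw [MvPolynomial.smul_monomial, smul_eq_mul, mul_one]
    rw [this]
    refine Subalgebra.smul_mem _ ?_ _
    exact torus_monomial_mem _ m rfl (by rw [← hweq]; exact hp m hm)
  · intro hp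
    rw [SetLike.mem_coe] at hp
    have hH : MvPolynomial.IsWeightedHomogeneous torusWeight p 0 := by
      induction hp using Algebra.adjoin_induction with
      | mem x hx =>
        rcases hx with ⟨a, rfl⟩ | ⟨bc, rfl⟩
        · simpa [torusWeight] using
            MvPolynomial.isWeightedHomogeneous_X (R := ℂ) torusWeight (Sum.inl a)
        · have := (MvPolynomial.isWeightedHomogeneous_X (R := ℂ)
              (torusWeight (A := A) (B := B) (C := C)) (Sum.inr (Sum.inl bc.1))).mul
            (MvPolynomial.isWeightedHomogeneous_X (R := ℂ)
              (torusWeight (A := A) (B := B) (C := C)) (Sum.inr (Sum.inr bc.2)))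
          simpa [torusWeight] using this
      | algebraMap r =>
        simpa [MvPolynomial.algebraMap_eq] using
          MvPolynomial.isWeightedHomogeneous_C (R := ℂ) torusWeight r
      | add x y hx hy ihx ihy => exact ihx.add ihy
      | mul x y hx hy ihx ihy => simpa using ihx.mul ihy
    intro m hm
    rw [hweq]
    exact hH (MvPolynomial.mem_support_iff.mp hm)
end

section
/- Let R be a commutative ring, let A be an m×n matrix over R and B an n×m matrix over R. Then X^n · charpoly(A·B) = X^m · charpoly(B·A), where charpoly denotes the characteristic polynomial and A·B is an m×m matrix while B·A is an n×n matrix. -/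
open Matrix Polynomial LaurentPolynomial

/-- Unit version of the rectangular determinant identity:
if `x` is a unit, `x ^ n * det (x • 1 - A * B) = x ^ m * det (x • 1 - B * A)`. -/
lemma det_smul_one_sub_mul_comm_of_unit {S : Type*} [CommRing S] {m n : ℕ} (x : Sˣ)
    (A : Matrix (Fin m) (Fin n) S) (B : Matrix (Fin n) (Fin m) S) :
    (x : S) ^ n * ((x : S) • (1 : Matrix (Fin m) (Fin m) S) - A * B).det =
      (x : S) ^ m * ((x : S) • (1 : Matrix (Fin n) (Fin n) S) - B * A).det := by
  have h1 : (x : S) • (1 : Matrix (Fin m) (Fin m) S) - A * B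
      = (x : S) • ((1 : Matrix (Fin m) (Fin m) S) - (((x⁻¹ : Sˣ) : S) • A) * B) := by
    rw [smul_sub, Matrix.smul_mul, smul_smul, Units.mul_inv, one_smul]
  have h2 : (x : S) • (1 : Matrix (Fin n) (Fin n) S) - B * A
      = (x : S) • ((1 : Matrix (Fin n) (Fin n) S) - B * (((x⁻¹ : Sˣ) : S) • A)) := by
    rw [smul_sub, Matrix.mul_smul, smul_smul, Units.mul_inv, one_smul]
  rw [h1, h2, Matrix.det_smul, Matrix.det_smul, Matrix.det_one_sub_mul_comm]
  simp only [Fintype.card_fin]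
  ring

/-- For rectangular matrices `A` (of size `m × n`) and `B` (of size `n × m`) over a
commutative ring, `X ^ n * charpoly (A * B) = X ^ m * charpoly (B * A)`; that is, the
nonzero eigenvalues of `A * B` and `B * A` coincide with multiplicity. -/
theorem charpoly_mul_comm_rectangular (R : Type*) [CommRing R] (m n : ℕ)
    (A : Matrix (Fin m) (Fin n) R) (B : Matrix (Fin n) (Fin m) R) :
    Polynomial.X ^ n * (A * B).charpoly = Polynomial.X ^ m * (B * A).charpoly := by
  apply Polynomial.toLaurent_injective
  obtain ⟨u, hu⟩ := LaurentPolynomial.isUnit_T (R := R) 1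
  have key : ∀ (k : ℕ) (M : Matrix (Fin k) (Fin k) R),
      (charmatrix M).map Polynomial.toLaurent
        = (u : R[T;T⁻¹]) • (1 : Matrix (Fin k) (Fin k) R[T;T⁻¹])
            - M.map LaurentPolynomial.C := by
    intro k M
    ext i j
    by_cases h : i = j <;>
      simp [charmatrix, Matrix.map_apply, Matrix.one_apply, Matrix.diagonal_apply, h, hu,
        Polynomial.toLaurent_C]
  simp only [_root_.map_mul, map_pow, Polynomial.toLaurent_X, Matrix.charpoly,
    RingHom.map_det, RingHom.mapMatrix_apply, key, ← hu]
  rw [show (A * B).map (LaurentPolynomial.C (R := R))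
      = A.map LaurentPolynomial.C * B.map LaurentPolynomial.C from
        Matrix.map_mul (f := LaurentPolynomial.C),
    show (B * A).map (LaurentPolynomial.C (R := R))
      = B.map LaurentPolynomial.C * A.map LaurentPolynomial.C from
        Matrix.map_mul (f := LaurentPolynomial.C)]
  exact det_smul_one_sub_mul_comm_of_unit u _ _
end
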